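/- Let Q be symmetric positive definite, A nonsingular with ‖AᵀQA − I‖ < 1/2, b ∈ ℝⁿ, and let u be the unique solution of (AᵀQA − I)u⁺ + u + Aᵀb = 0. Then the semi-smooth Newton sequence x_{k+1} := −((AᵀQA − I)·diag(sgn(x_k⁺)) + I)⁻¹ Aᵀb, starting from any x₀ ∈ ℝⁿ, is well defined and satisfies ‖u − x_{k+1}‖ ≤ (‖AᵀQA − I‖/(1 − ‖AᵀQA − I‖))·‖u − x_k‖ for all k; in particular, since ‖AᵀQA−I‖ < 1/2 the factor is < 1 and x_k converges to u. -/

import Mathlib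

/-!
Write `B = AᵀQA − I`, `t = ‖B‖` and `D_z = diag(sgn(z⁺))`. Since `‖D_z‖ ≤ 1` and `t < 1`, the matrix
`B D_z + I` is invertible. Subtracting the Newton equation `B D_{x_k} x_{k+1} + x_{k+1} = −Aᵀb` from
the fixed-point equation `B u⁺ + u = −Aᵀb` gives
`u − x_{k+1} = B (D_{x_k} u − u⁺) − B D_{x_k} (u − x_{k+1})`,
and componentwise `|sgn(c⁺) a − a⁺| ≤ |a − c|`, so `‖D_{x_k} u − u⁺‖ ≤ ‖u − x_k‖`. Hence
`‖u − x_{k+1}‖ ≤ t ‖u − x_k‖ + t ‖u − x_{k+1}‖`, which is the contraction with factor `t / (1 − t)`,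
and this factor is `< 1` exactly when `t < 1/2`.
-/

noncomputable section

/-- `E n` is the n-dimensional Euclidean space over ℝ. -/
abbrev E (n : ℕ) := EuclideanSpace ℝ (Fin n)

variable {n : ℕ}

/-- componentwise positive part `x⁺` -/
def posPart (x : E n) : E n := WithLp.toLp 2 (fun i => max (x i) 0)

/-- componentwise negative part `x⁻` -/
def negPart (x : E n) : E n := WithLp.toLp 2 (fun i => max (-(x i)) 0)

/-- the 0-1 vector `sgn(x⁺)` indicating positive components of `x` -/
def sgnPos (x : E n) : Fin n → ℝ := fun i => if 0 < x i then 1 else 0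

/-- matrix-vector multiplication on Euclidean space -/
def mulV (M : Matrix (Fin n) (Fin n) ℝ) (x : E n) : E n := Matrix.toEuclideanLin M x

/-- operator norm of a matrix induced by the Euclidean norm -/
def opN (M : Matrix (Fin n) (Fin n) ℝ) : ℝ :=
  ‖LinearMap.toContinuousLinearMap (Matrix.toEuclideanLin M)‖

/-- the nonnegative orthant ℝⁿ₊ -/
def nonnegOrthant (n : ℕ) : Set (E n) := {x | ∀ i, 0 ≤ x i}

/-- the simplicial cone A·ℝⁿ₊ -/
def simplicialCone (A : Matrix (Fin n) (Fin n) ℝ) : Set (E n) :=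
  {y | ∃ x ∈ nonnegOrthant n, y = mulV A x}

/-- the dual cone K* of a set K -/
def dualCone (K : Set (E n)) : Set (E n) := {y | ∀ x ∈ K, 0 ≤ (inner ℝ y x : ℝ)}

open Filter Topology

lemma mulV_apply (M : Matrix (Fin n) (Fin n) ℝ) (x : E n) (i : Fin n) :
    mulV M x i = M.mulVec x i := rfl

lemma mulV_sub (M : Matrix (Fin n) (Fin n) ℝ) (x y : E n) :
    mulV M (x - y) = mulV M x - mulV M y :=
  map_sub _ x y

lemma mulV_mul_add_one (B D : Matrix (Fin n) (Fin n) ℝ) (x : E n) :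
    mulV (B * D + 1) x = mulV B (mulV D x) + x := by
  ext i
  simp only [mulV_apply, PiLp.add_apply, Matrix.add_mulVec, Matrix.one_mulVec,
    ← Matrix.mulVec_mulVec]
  rfl

lemma norm_mulV_le (M : Matrix (Fin n) (Fin n) ℝ) (x : E n) : ‖mulV M x‖ ≤ opN M * ‖x‖ :=
  (LinearMap.toContinuousLinearMap (Matrix.toEuclideanLin M)).le_opNorm x

lemma opN_nonneg (M : Matrix (Fin n) (Fin n) ℝ) : 0 ≤ opN M := norm_nonneg _

lemma norm_le_norm_of_abs_le {y z : E n} (h : ∀ i, |y i| ≤ |z i|) : ‖y‖ ≤ ‖z‖ := by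
  rw [EuclideanSpace.norm_eq, EuclideanSpace.norm_eq]
  gcongr with i
  exact h i

lemma norm_mulV_diagonal_le {d : Fin n → ℝ} (hd : ∀ i, |d i| ≤ 1) (x : E n) :
    ‖mulV (Matrix.diagonal d) x‖ ≤ ‖x‖ := by
  refine norm_le_norm_of_abs_le fun i => ?_
  rw [mulV_apply, Matrix.mulVec_diagonal, abs_mul]
  exact mul_le_of_le_one_left (abs_nonneg _) (hd i)

lemma abs_sgnPos_le_one (z : E n) (i : Fin n) : |sgnPos z i| ≤ 1 := by
  unfold sgnPos
  split_ifs <;> simp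

lemma isUnit_det_mul_add_one {B D : Matrix (Fin n) (Fin n) ℝ} (hB : opN B < 1)
    (hD : ∀ x, ‖mulV D x‖ ≤ ‖x‖) : IsUnit (B * D + 1).det := by
  rw [isUnit_iff_ne_zero]
  intro hdet
  obtain ⟨v, hv0, hv⟩ := Matrix.exists_mulVec_eq_zero_iff.mpr hdet
  set x : E n := WithLp.toLp 2 v
  have hx0 : x ≠ 0 := fun hx => hv0 (congrArg WithLp.ofLp hx)
  have hx : mulV B (mulV D x) = -x := by
    rw [eq_neg_iff_add_eq_zero, ← mulV_mul_add_one]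
    exact congrArg (WithLp.toLp 2) hv
  have hle : ‖x‖ ≤ opN B * ‖x‖ :=
    calc ‖x‖ = ‖mulV B (mulV D x)‖ := by rw [hx, norm_neg]
      _ ≤ opN B * ‖mulV D x‖ := norm_mulV_le _ _
      _ ≤ opN B * ‖x‖ := by gcongr; exacts [opN_nonneg B, hD x]
  nlinarith [norm_pos_iff.mpr hx0]

lemma abs_ite_pos_mul_sub_max_le (a c : ℝ) :
    |(if 0 < c then 1 else 0) * a - max a 0| ≤ |a - c| := by
  split_ifs with hc
  · rcases le_or_gt a 0 with ha | ha
    · rw [max_eq_right ha, one_mul, sub_zero, abs_of_nonpos ha, abs_of_nonpos (by linarith)]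
      linarith
    · simp [max_eq_left ha.le]
  · rcases le_or_gt a 0 with ha | ha
    · simp [max_eq_right ha]
    · rw [max_eq_left ha.le, zero_mul, zero_sub, abs_neg, abs_of_pos ha,
        abs_of_pos (by linarith)]
      linarith

/-- The semismoothness estimate for `x ↦ x⁺` with generalized Jacobian `diag(sgn(z⁺))`. -/
lemma norm_mulV_diagonal_sgnPos_sub_posPart_le (u z : E n) :
    ‖mulV (Matrix.diagonal (sgnPos z)) u - posPart u‖ ≤ ‖u - z‖ := by
  refine norm_le_norm_of_abs_le fun i => ?_
  simpa [mulV_apply, Matrix.mulVec_diagonal, sgnPos, _root_.posPart] using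
    abs_ite_pos_mul_sub_max_le (u i) (z i)

theorem norm_sub_newton_step_le {B : Matrix (Fin n) (Fin n) ℝ} (hB : opN B < 1) {b u z z' : E n}
    (hu : mulV B (posPart u) + u + b = 0)
    (hstep : mulV (B * Matrix.diagonal (sgnPos z) + 1) z' = -b) :
    ‖u - z'‖ ≤ opN B / (1 - opN B) * ‖u - z‖ := by
  set D := Matrix.diagonal (sgnPos z)
  set t := opN B
  have hB0 : 0 ≤ t := opN_nonneg B
  have herr : u - z' = mulV B (mulV D u - posPart u) - mulV B (mulV D (u - z')) := by
    rw [mulV_mul_add_one] at hstep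
    rw [mulV_sub, mulV_sub, mulV_sub, eq_sub_of_add_eq (eq_neg_of_add_eq_zero_left hu),
      eq_sub_of_add_eq hstep]
    abel
  have hle : ‖u - z'‖ ≤ t * ‖u - z‖ + t * ‖u - z'‖ :=
    calc ‖u - z'‖ = ‖mulV B (mulV D u - posPart u) - mulV B (mulV D (u - z'))‖ :=
          congrArg norm herr
      _ ≤ ‖mulV B (mulV D u - posPart u)‖ + ‖mulV B (mulV D (u - z'))‖ := norm_sub_le _ _
      _ ≤ t * ‖mulV D u - posPart u‖ + t * ‖mulV D (u - z')‖ :=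
          add_le_add (norm_mulV_le _ _) (norm_mulV_le _ _)
      _ ≤ t * ‖u - z‖ + t * ‖u - z'‖ :=
          add_le_add
            (mul_le_mul_of_nonneg_left (norm_mulV_diagonal_sgnPos_sub_posPart_le u z) hB0)
            (mul_le_mul_of_nonneg_left (norm_mulV_diagonal_le (abs_sgnPos_le_one z) _) hB0)
  rw [div_mul_eq_mul_div, le_div_iff₀ (by linarith)]
  linarith

theorem tendsto_of_dist_succ_le_mul {X : Type*} [PseudoMetricSpace X] {x : ℕ → X} {u : X}
    {r : ℝ} (hr0 : 0 ≤ r) (hr1 : r < 1) (h : ∀ k, dist u (x (k + 1)) ≤ r * dist u (x k)) :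
    Tendsto x atTop (𝓝 u) := by
  have hgeom : ∀ k, dist u (x k) ≤ r ^ k * dist u (x 0) := by
    intro k
    induction k with
    | zero => simp
    | succ k ih =>
      calc dist u (x (k + 1)) ≤ r * dist u (x k) := h k
        _ ≤ r * (r ^ k * dist u (x 0)) := by gcongr
        _ = r ^ (k + 1) * dist u (x 0) := by ring
  have hlim : Tendsto (fun k => r ^ k * dist u (x 0)) atTop (𝓝 0) := by
    simpa using (tendsto_pow_atTop_nhds_zero_of_lt_one hr0 hr1).mul_const (dist u (x 0))
  refine tendsto_iff_dist_tendsto_zero.mpr ?_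
  simp_rw [dist_comm _ u]
  exact squeeze_zero (fun _ => dist_nonneg) hgeom hlim

theorem stmt12_general (Q A : Matrix (Fin n) (Fin n) ℝ)
    (h : opN (A.transpose * Q * A - 1) < 1/2) (b u : E n)
    (hu : mulV (A.transpose * Q * A - 1) (posPart u) + u + mulV A.transpose b = 0)
    (x : ℕ → E n)
    (hrec : ∀ k, mulV ((A.transpose * Q * A - 1) * Matrix.diagonal (sgnPos (x k)) + 1)
        (x (k + 1)) = -(mulV A.transpose b)) :
    (∀ z : E n,
      IsUnit ((A.transpose * Q * A - 1) * Matrix.diagonal (sgnPos z) + 1).det) ∧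
    (∀ k, ‖u - x (k + 1)‖ ≤
      (opN (A.transpose * Q * A - 1) / (1 - opN (A.transpose * Q * A - 1))) * ‖u - x k‖) ∧
    (opN (A.transpose * Q * A - 1) / (1 - opN (A.transpose * Q * A - 1)) < 1) ∧
    Filter.Tendsto x Filter.atTop (nhds u) := by
  set t := opN (A.transpose * Q * A - 1)
  have ht0 : 0 ≤ t := opN_nonneg _
  have ht1 : t < 1 := by linarith
  have hstep : ∀ k, ‖u - x (k + 1)‖ ≤ t / (1 - t) * ‖u - x k‖ :=
    fun k => norm_sub_newton_step_le ht1 hu (hrec k)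
  have hfactor : t / (1 - t) < 1 := by
    rw [div_lt_one (by linarith)]
    linarith
  refine ⟨fun z => isUnit_det_mul_add_one ht1 (norm_mulV_diagonal_le (abs_sgnPos_le_one z)),
    hstep, hfactor, ?_⟩
  refine tendsto_of_dist_succ_le_mul (div_nonneg ht0 (by linarith)) hfactor fun k => ?_
  simpa only [dist_eq_norm] using hstep k

theorem stmt12 (Q A : Matrix (Fin n) (Fin n) ℝ) (hQ : Q.PosDef) (hA : IsUnit A.det)
    (h : opN (A.transpose * Q * A - 1) < 1/2) (b u : E n)
    (hu : mulV (A.transpose * Q * A - 1) (posPart u) + u + mulV A.transpose b = 0)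
    (x : ℕ → E n)
    (hrec : ∀ k, mulV ((A.transpose * Q * A - 1) * Matrix.diagonal (sgnPos (x k)) + 1)
        (x (k + 1)) = -(mulV A.transpose b)) :
    (∀ z : E n,
      IsUnit ((A.transpose * Q * A - 1) * Matrix.diagonal (sgnPos z) + 1).det) ∧
    (∀ k, ‖u - x (k + 1)‖ ≤
      (opN (A.transpose * Q * A - 1) / (1 - opN (A.transpose * Q * A - 1))) * ‖u - x k‖) ∧
    (opN (A.transpose * Q * A - 1) / (1 - opN (A.transpose * Q * A - 1)) < 1) ∧
    Filter.Tendsto x Filter.atTop (nhds u) :=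
  stmt12_general Q A h b u hu x hrec
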